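/- For all bounded operators A, B on a complex Hilbert space and every r ≥ 1: w(B*A)^r ≤ (1/4)‖(AA*)^r + (BB*)^r‖ + (1/2)·w(AB*)^r. -/

import Mathlib

/-!
For a unit vector `x` with `B x ≠ 0`, put `y = B x / ‖B x‖`. Then
`⟪B* A x, x⟫ = ⟪A x, B x⟫ = ⟪B* y, x⟫ ⟪x, A* y⟫`, and Buzano's inequality bounds its modulus by
`(‖A* y‖ ‖B* y‖ + |⟪A B* y, y⟫|) / 2 ≤ (‖A* y‖ ‖B* y‖ + w(A B*)) / 2`.
Raising to the power `r` and using convexity of `t ↦ t ^ r` and AM-GM leaves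
`(‖A* y‖² ^ r + ‖B* y‖² ^ r) / 4`, and `‖A* y‖² ^ r = ⟪A A* y, y⟫ ^ r ≤ ⟪(A A*) ^ r y, y⟫` by the
McCarthy inequality, which follows from a supporting line of `t ↦ t ^ r` and the monotonicity
of the continuous functional calculus.
-/

open scoped ComplexConjugate

variable {H : Type*} [NormedAddCommGroup H] [InnerProductSpace ℂ H] [CompleteSpace H]

/-- The numerical radius of a bounded operator. -/
noncomputable def numRadius (A : H →L[ℂ] H) : ℝ :=
  sSup {t : ℝ | ∃ x : H, ‖x‖ = 1 ∧ t = ‖(inner ℂ (A x) x : ℂ)‖}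

open RCLike ContinuousLinearMap
open scoped InnerProductSpace

/-- Buzano's inequality: reflecting `b` in the line through `e` preserves its norm. -/
theorem norm_inner_mul_inner_le {𝕜 E : Type*} [RCLike 𝕜] [NormedAddCommGroup E]
    [InnerProductSpace 𝕜 E] {e : E} (he : ‖e‖ = 1) (a b : E) :
    ‖⟪a, e⟫_𝕜 * ⟪e, b⟫_𝕜‖ ≤ (‖a‖ * ‖b‖ + ‖⟪a, b⟫_𝕜‖) / 2 := by
  have hreflect : ⟪a, (𝕜 ∙ e).reflection b⟫_𝕜 = 2 * (⟪a, e⟫_𝕜 * ⟪e, b⟫_𝕜) - ⟪a, b⟫_𝕜 := by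
    rw [Submodule.reflection_apply, Submodule.starProjection_unit_singleton 𝕜 he,
      inner_sub_right, ← ofNat_smul_eq_nsmul (R := 𝕜), inner_smul_right, inner_smul_right]
    ring
  have hcs := norm_inner_le_norm (𝕜 := 𝕜) a ((𝕜 ∙ e).reflection b)
  rw [LinearIsometryEquiv.norm_map, hreflect] at hcs
  have htri := norm_sub_norm_le (2 * (⟪a, e⟫_𝕜 * ⟪e, b⟫_𝕜)) ⟪a, b⟫_𝕜
  rw [norm_mul, RCLike.norm_two] at htri
  linarith

theorem Real.add_mul_sub_le_rpow {r s t : ℝ} (hr : 1 ≤ r) (hs : 0 < s) (ht : 0 ≤ t) :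
    s ^ r + r * s ^ (r - 1) * (t - s) ≤ t ^ r := by
  have hbern := one_add_mul_self_le_rpow_one_add (s := t / s - 1)
    (by linarith [div_nonneg ht hs.le]) hr
  rw [add_sub_cancel, Real.div_rpow ht hs.le, le_div_iff₀ (by positivity)] at hbern
  have hsr : s ^ r = s ^ (r - 1) * s := by
    rw [← Real.rpow_add_one hs.ne']
    norm_num
  calc s ^ r + r * s ^ (r - 1) * (t - s) = (1 + r * (t / s - 1)) * s ^ r := by
        rw [hsr]
        field_simp
    _ ≤ t ^ r := hbern

theorem re_inner_le_re_inner_of_le {𝕜 E : Type*} [RCLike 𝕜] [NormedAddCommGroup E]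
    [InnerProductSpace 𝕜 E] {S T : E →L[𝕜] E} (h : S ≤ T) (y : E) :
    re ⟪S y, y⟫_𝕜 ≤ re ⟪T y, y⟫_𝕜 := by
  have := ((le_def S T).1 h).re_inner_nonneg_left y
  rwa [sub_apply, inner_sub_left, map_sub, sub_nonneg] at this

theorem re_inner_le_norm_of_norm_eq_one {𝕜 E : Type*} [RCLike 𝕜] [NormedAddCommGroup E]
    [InnerProductSpace 𝕜 E] (T : E →L[𝕜] E) {y : E} (hy : ‖y‖ = 1) :
    re ⟪T y, y⟫_𝕜 ≤ ‖T‖ :=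
  calc re ⟪T y, y⟫_𝕜 ≤ ‖T y‖ * ‖y‖ := re_inner_le_norm _ _
    _ ≤ ‖T‖ := by simpa [hy] using T.le_opNorm y

theorem add_mul_re_inner_le_re_inner_cfc {T : H →L[ℂ] H} (hT : IsSelfAdjoint T) {g : ℝ → ℝ}
    (hg : ContinuousOn g (spectrum ℝ T)) {a b : ℝ} (h : ∀ t ∈ spectrum ℝ T, a + b * t ≤ g t)
    (y : H) : a * ‖y‖ ^ 2 + b * re ⟪T y, y⟫_ℂ ≤ re ⟪cfc g T y, y⟫_ℂ := by
  have hle : algebraMap ℝ _ a + b • T ≤ cfc g T :=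
    calc algebraMap ℝ _ a + b • T = cfc (fun t => a + b * t) T := by
          rw [cfc_const_add a (b * ·) T, cfc_const_mul_id b T]
      _ ≤ cfc g T := cfc_mono h
  have := re_inner_le_re_inner_of_le hle y
  rwa [Algebra.algebraMap_eq_smul_one, add_apply, smul_apply, smul_apply, one_apply_eq_self,
    inner_add_left, real_smul_eq_coe_smul (K := ℂ), real_smul_eq_coe_smul (K := ℂ),
    inner_smul_left, inner_smul_left, conj_ofReal, conj_ofReal, map_add, re_ofReal_mul,
    re_ofReal_mul, inner_self_eq_norm_sq] at this

/-- McCarthy's inequality. -/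
theorem re_inner_rpow_le_re_inner_rpow {T : H →L[ℂ] H} (hT : 0 ≤ T) {y : H} (hy : ‖y‖ = 1)
    {r : ℝ} (hr : 1 ≤ r) : re ⟪T y, y⟫_ℂ ^ r ≤ re ⟪(T ^ r) y, y⟫_ℂ := by
  have hpos := (nonneg_iff_isPositive T).1 hT
  set μ := re ⟪T y, y⟫_ℂ
  rcases (hpos.re_inner_nonneg_left y).eq_or_lt with hμ | hμ
  · rw [show μ = 0 from hμ.symm, Real.zero_rpow (by linarith)]
    exact ((nonneg_iff_isPositive _).1 CFC.rpow_nonneg).re_inner_nonneg_left y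
  · have htangent := add_mul_re_inner_le_re_inner_cfc hpos.isSelfAdjoint (g := (· ^ r))
      (Real.continuous_rpow_const (by linarith)).continuousOn
      (a := μ ^ r - r * μ ^ (r - 1) * μ) (b := r * μ ^ (r - 1))
      (fun t ht => by
        linarith [Real.add_mul_sub_le_rpow hr hμ (spectrum_nonneg_of_nonneg hT ht)]) y
    rw [← CFC.rpow_eq_cfc_real hT, hy] at htangent
    linarith

theorem rpow_norm_star_apply_sq_le (A : H →L[ℂ] H) {y : H} (hy : ‖y‖ = 1) {r : ℝ}
    (hr : 1 ≤ r) : (‖star A y‖ ^ r) ^ 2 ≤ re ⟪((A * star A) ^ r) y, y⟫_ℂ := by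
  have hsq : ‖star A y‖ ^ 2 = re ⟪(A * star A) y, y⟫_ℂ := by
    rw [(star A).apply_norm_sq_eq_inner_adjoint_left y, ← star_eq_adjoint, star_star]
    rfl
  rw [Real.rpow_pow_comm (norm_nonneg _), hsq]
  exact re_inner_rpow_le_re_inner_rpow (mul_star_self_nonneg A) hy hr

theorem rpow_norm_star_apply_mul_le (A B : H →L[ℂ] H) {y : H} (hy : ‖y‖ = 1) {r : ℝ}
    (hr : 1 ≤ r) :
    (‖star A y‖ * ‖star B y‖) ^ r ≤ ‖(A * star A) ^ r + (B * star B) ^ r‖ / 2 := by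
  have hsum : re ⟪((A * star A) ^ r) y, y⟫_ℂ + re ⟪((B * star B) ^ r) y, y⟫_ℂ
      ≤ ‖(A * star A) ^ r + (B * star B) ^ r‖ := by
    rw [← map_add, ← inner_add_left, ← add_apply]
    exact re_inner_le_norm_of_norm_eq_one _ hy
  rw [Real.mul_rpow (norm_nonneg _) (norm_nonneg _)]
  linarith [two_mul_le_add_sq (‖star A y‖ ^ r) (‖star B y‖ ^ r),
    rpow_norm_star_apply_sq_le A hy hr, rpow_norm_star_apply_sq_le B hy hr]

section NumRadius

variable {E : Type*} [NormedAddCommGroup E] [InnerProductSpace ℂ E]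

theorem norm_inner_le_numRadius (T : E →L[ℂ] E) {x : E} (hx : ‖x‖ = 1) :
    ‖⟪T x, x⟫_ℂ‖ ≤ numRadius T := by
  refine le_csSup ⟨‖T‖, ?_⟩ ⟨x, hx, rfl⟩
  rintro _ ⟨x, hx, rfl⟩
  calc ‖⟪T x, x⟫_ℂ‖ ≤ ‖T x‖ * ‖x‖ := norm_inner_le_norm _ _
    _ ≤ ‖T‖ * ‖x‖ * ‖x‖ := by gcongr; exact T.le_opNorm x
    _ = ‖T‖ := by rw [hx, mul_one, mul_one]

theorem numRadius_nonneg (T : E →L[ℂ] E) : 0 ≤ numRadius T :=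
  Real.sSup_nonneg fun _ ⟨_, _, ht⟩ => ht ▸ norm_nonneg _

theorem numRadius_rpow_le {T : E →L[ℂ] E} {r c : ℝ} (hr : 0 < r) (hc : 0 ≤ c)
    (h : ∀ x : E, ‖x‖ = 1 → ‖⟪T x, x⟫_ℂ‖ ^ r ≤ c) : numRadius T ^ r ≤ c := by
  refine (Real.le_rpow_inv_iff_of_pos (numRadius_nonneg T) hc hr).1 ?_
  refine Real.sSup_le ?_ (by positivity)
  rintro _ ⟨x, hx, rfl⟩
  exact (Real.le_rpow_inv_iff_of_pos (norm_nonneg _) hc hr).2 (h x hx)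

end NumRadius

theorem exists_norm_inner_star_mul_apply_le (A B : H →L[ℂ] H) {x : H} (hx : ‖x‖ = 1) :
    ∃ y : H, ‖y‖ = 1 ∧
      ‖⟪(star B * A) x, x⟫_ℂ‖ ≤ (‖star A y‖ * ‖star B y‖ + numRadius (A * star B)) / 2 := by
  have hBA : ⟪(star B * A) x, x⟫_ℂ = ⟪A x, B x⟫_ℂ := by
    rw [mul_apply_eq_comp, star_eq_adjoint, adjoint_inner_left]
  by_cases hBx : B x = 0
  · refine ⟨x, hx, ?_⟩
    rw [hBA, hBx, inner_zero_right, norm_zero]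
    have := numRadius_nonneg (A * star B)
    positivity
  set y : H := (‖B x‖⁻¹ : ℂ) • B x
  have hy : ‖y‖ = 1 := norm_smul_inv_norm hBx
  have hfactor : ⟪(star B * A) x, x⟫_ℂ = ⟪star B y, x⟫_ℂ * ⟪x, star A y⟫_ℂ := by
    have hBx' : (‖B x‖ : ℂ) ≠ 0 := by exact_mod_cast norm_ne_zero_iff.2 hBx
    rw [hBA, star_eq_adjoint, star_eq_adjoint, adjoint_inner_left, adjoint_inner_right,
      inner_smul_left, inner_smul_right, inner_self_eq_norm_sq_to_K, map_inv₀, Complex.conj_ofReal]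
    field_simp
    rfl
  have hcross : ⟪star B y, star A y⟫_ℂ = ⟪(A * star B) y, y⟫_ℂ := by
    rw [mul_apply_eq_comp, star_eq_adjoint A, adjoint_inner_right]
  refine ⟨y, hy, ?_⟩
  calc ‖⟪(star B * A) x, x⟫_ℂ‖
      ≤ (‖star B y‖ * ‖star A y‖ + ‖⟪star B y, star A y⟫_ℂ‖) / 2 := by
        rw [hfactor]
        exact norm_inner_mul_inner_le hx _ _
    _ ≤ (‖star A y‖ * ‖star B y‖ + numRadius (A * star B)) / 2 := by
        rw [hcross, mul_comm]
        gcongr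
        exact norm_inner_le_numRadius _ hy

theorem statement11 (A B : H →L[ℂ] H) (r : ℝ) (hr : 1 ≤ r) :
    numRadius (star B * A) ^ r ≤
      (1 / 4) * ‖(A * star A) ^ r + (B * star B) ^ r‖ +
        (1 / 2) * numRadius (A * star B) ^ r := by
  have hw := numRadius_nonneg (A * star B)
  refine numRadius_rpow_le (by linarith) (by positivity) fun x hx => ?_
  obtain ⟨y, hy, hxy⟩ := exists_norm_inner_star_mul_apply_le A B hx
  have hp : 0 ≤ ‖star A y‖ * ‖star B y‖ := by positivity
  calc ‖⟪(star B * A) x, x⟫_ℂ‖ ^ r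
      ≤ ((1 / 2 : ℝ) • (‖star A y‖ * ‖star B y‖) + (1 / 2 : ℝ) • numRadius (A * star B)) ^ r := by
        rw [smul_eq_mul, smul_eq_mul]
        gcongr
        linarith
    _ ≤ (1 / 2 : ℝ) • (‖star A y‖ * ‖star B y‖) ^ r + (1 / 2 : ℝ) • numRadius (A * star B) ^ r :=
        (convexOn_rpow hr).2 hp hw (by norm_num) (by norm_num) (by norm_num)
    _ ≤ (1 / 2) * (‖(A * star A) ^ r + (B * star B) ^ r‖ / 2) +
          (1 / 2) * numRadius (A * star B) ^ r := by
        rw [smul_eq_mul, smul_eq_mul]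
        gcongr
        exact rpow_norm_star_apply_mul_le A B hy hr
    _ = _ := by ring
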